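/- arXiv:2509.16887 — 5 statements merged into one kernel-verified Lean document; each statement's English description precedes it below -/
import Mathlib

section
/- Let σ be a probability vector of length D (a vector with nonnegative real entries summing to 1), let Σ = diag(σ) be the D×D diagonal matrix with σ on the diagonal, and let E be a real D×D matrix all of whose entries lie in the interval [0,1]. If σᵀ E σ ≤ ε for some real ε ≥ 0, then the operator norm of the matrix √Σ E √Σ satisfies ‖√Σ E √Σ‖_op ≤ √ε. -/
open scoped BigOperators

/-- The Euclidean (ℓ²) operator norm of a real `D × D` matrix. -/
noncomputable def matOpNorm {D : ℕ} (A : Matrix (Fin D) (Fin D) ℝ) : ℝ :=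
  ‖(Matrix.toEuclideanCLM (𝕜 := ℝ) A :
      EuclideanSpace ℝ (Fin D) →L[ℝ] EuclideanSpace ℝ (Fin D))‖

theorem stmt0 {D : ℕ} (σ : Fin D → ℝ) (hσ0 : ∀ i, 0 ≤ σ i) (hσ1 : ∑ i, σ i = 1)
    (E : Matrix (Fin D) (Fin D) ℝ) (hE : ∀ i j, E i j ∈ Set.Icc (0 : ℝ) 1)
    (ε : ℝ) (hε : 0 ≤ ε)
    (h : ∑ i, ∑ j, σ i * E i j * σ j ≤ ε) :
    matOpNorm (Matrix.diagonal (fun i => Real.sqrt (σ i)) * E *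
      Matrix.diagonal (fun i => Real.sqrt (σ i))) ≤ Real.sqrt ε := by
  set M : Matrix (Fin D) (Fin D) ℝ :=
    Matrix.diagonal (fun i => Real.sqrt (σ i)) * E *
      Matrix.diagonal (fun i => Real.sqrt (σ i)) with hM
  have hMentry : ∀ i j, M i j = Real.sqrt (σ i) * E i j * Real.sqrt (σ j) := by
    intro i j
    simp [hM, Matrix.mul_diagonal, Matrix.diagonal_mul]
  -- Frobenius bound
  have hF : ∑ i, ∑ j, (M i j) ^ 2 ≤ ε := by
    refine le_trans ?_ h
    apply Finset.sum_le_sum; intro i _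
    apply Finset.sum_le_sum; intro j _
    rw [hMentry i j]
    have h1 : (Real.sqrt (σ i) * E i j * Real.sqrt (σ j)) ^ 2
        = σ i * (E i j ^ 2) * σ j := by
      rw [mul_pow, mul_pow, Real.sq_sqrt (hσ0 i), Real.sq_sqrt (hσ0 j)]
    rw [h1]
    have h2 : E i j ^ 2 ≤ E i j := by
      nlinarith [(hE i j).1, (hE i j).2]
    have := mul_le_mul_of_nonneg_left h2 (hσ0 i)
    exact mul_le_mul_of_nonneg_right this (hσ0 j)
  unfold matOpNorm
  apply ContinuousLinearMap.opNorm_le_bound _ (Real.sqrt_nonneg ε)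
  intro x
  have hx : ∀ i, (Matrix.toEuclideanCLM (𝕜 := ℝ) M x) i = M.mulVec x i := by
    intro i
    have := Matrix.ofLp_toEuclideanCLM (𝕜 := ℝ) M x
    exact congrFun this i
  rw [EuclideanSpace.norm_eq]
  have hxnorm : ‖x‖ = Real.sqrt (∑ j, x j ^ 2) := by
    rw [EuclideanSpace.norm_eq]
    congr 1; apply Finset.sum_congr rfl; intro j _
    rw [Real.norm_eq_abs, sq_abs]
  have key : ∑ i, ‖(Matrix.toEuclideanCLM (𝕜 := ℝ) M x) i‖ ^ 2
      ≤ ε * ∑ j, x j ^ 2 := by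
    have : ∀ i, ‖(Matrix.toEuclideanCLM (𝕜 := ℝ) M x) i‖ ^ 2
        ≤ (∑ j, M i j ^ 2) * ∑ j, x j ^ 2 := by
      intro i
      rw [hx i, Real.norm_eq_abs, sq_abs, Matrix.mulVec, dotProduct]
      exact Finset.sum_mul_sq_le_sq_mul_sq _ _ _
    calc ∑ i, ‖(Matrix.toEuclideanCLM (𝕜 := ℝ) M x) i‖ ^ 2
        ≤ ∑ i, (∑ j, M i j ^ 2) * ∑ j, x j ^ 2 :=
          Finset.sum_le_sum fun i _ => this i
      _ = (∑ i, ∑ j, M i j ^ 2) * ∑ j, x j ^ 2 := by rw [Finset.sum_mul]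
      _ ≤ ε * ∑ j, x j ^ 2 := by
          apply mul_le_mul_of_nonneg_right hF
          exact Finset.sum_nonneg fun j _ => sq_nonneg _
  calc Real.sqrt (∑ i, ‖(Matrix.toEuclideanCLM (𝕜 := ℝ) M x) i‖ ^ 2)
      ≤ Real.sqrt (ε * ∑ j, x j ^ 2) := Real.sqrt_le_sqrt key
    _ = Real.sqrt ε * Real.sqrt (∑ j, x j ^ 2) := Real.sqrt_mul hε _
    _ = Real.sqrt ε * ‖x‖ := by rw [hxnorm]
end

section
/- Let N ≥ 1 and equip the space of N×N complex matrices with the normalized Hilbert–Schmidt inner product ⟨A,B⟩ = tr(A†B)/N. Let (P_i) be an orthonormal basis of this matrix space with respect to this inner product, and let Φ be a linear map on N×N complex matrices with Φ(P_i) = α_i P_i for complex scalars α_i. Let ρ be a positive semidefinite N×N matrix with tr(ρ) = 1, and let Π be an N×N Hermitian matrix with 0 ≤ Π ≤ I and rank(Π) ≤ r. Then |tr(Π† Φ(ρ))|² ≤ tr(Π²) · max_i |α_i|² ≤ r · max_i |α_i|². -/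
/-!
In the orthonormal basis `P` the pairing `tr(Aᴴ B)` becomes `N ∑ conj aᵢ bᵢ` in coordinates, and
`Φ` multiplies the `i`-th coordinate by `αᵢ`. Cauchy–Schwarz therefore gives
`|tr(Πᴴ Φ ρ)|² ≤ tr(Π²) · max |αᵢ|² · tr(ρ²)`, and `tr(ρ²) = ∑ λᵢ² ≤ (∑ λᵢ)² = 1` for the
eigenvalues `λᵢ ≥ 0` of `ρ`. The eigenvalues `μᵢ` of `Π` lie in `[0, 1]`, so
`tr(Π²) = ∑ μᵢ²` is at most the number of nonzero `μᵢ`, which is `rank Π`.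
-/

open scoped BigOperators Matrix ComplexOrder
open Finset

namespace Module.Basis

variable {R M ι : Type*} [CommSemiring R] [AddCommMonoid M] [Module R M] [Fintype ι]

theorem repr_map_eq_mul_of_map_eq_smul (P : Basis ι R M) {Φ : M →ₗ[R] M} {α : ι → R}
    (hΦ : ∀ i, Φ (P i) = α i • P i) (x : M) (i : ι) :
    P.repr (Φ x) i = α i * P.repr x i := by
  have : Φ x = ∑ j, (α j * P.repr x j) • P j := by
    conv_lhs => rw [← P.sum_repr x]
    simp only [map_sum, map_smul, hΦ, smul_smul, mul_comm]
  rw [this, P.repr_sum_self]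

end Module.Basis

namespace Matrix

section Parseval

variable {n ι : Type*} [Fintype n] [Fintype ι] [DecidableEq ι]
  (P : Module.Basis ι ℂ (Matrix n n ℂ))

theorem trace_conjTranspose_mul_eq_sum_repr {c : ℂ}
    (hP : ∀ i j, ((P i)ᴴ * P j).trace = if i = j then c else 0) (A B : Matrix n n ℂ) :
    (Aᴴ * B).trace = c * ∑ i, star (P.repr A i) * P.repr B i := by
  conv_lhs => rw [← P.sum_repr A, ← P.sum_repr B]
  simp only [conjTranspose_sum, conjTranspose_smul, sum_mul, mul_sum, smul_mul_smul_comm,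
    trace_sum, trace_smul, hP, smul_eq_mul, mul_ite, mul_zero, sum_ite_eq', mem_univ, if_true]
  exact sum_congr rfl fun i _ => by ring

theorem trace_conjTranspose_mul_self_eq_sum_norm_sq {c : ℝ}
    (hP : ∀ i j, ((P i)ᴴ * P j).trace = if i = j then (c : ℂ) else 0) (A : Matrix n n ℂ) :
    (Aᴴ * A).trace = ((c * ∑ i, ‖P.repr A i‖ ^ 2 : ℝ) : ℂ) := by
  rw [trace_conjTranspose_mul_eq_sum_repr P hP]
  push_cast
  simp only [Complex.star_def, Complex.conj_mul']

theorem norm_trace_conjTranspose_mul_map_sq_le {c : ℝ}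
    (hP : ∀ i j, ((P i)ᴴ * P j).trace = if i = j then (c : ℂ) else 0)
    {Φ : Matrix n n ℂ →ₗ[ℂ] Matrix n n ℂ} {α : ι → ℂ} (hΦ : ∀ i, Φ (P i) = α i • P i)
    {M : ℝ} (hαM : ∀ i, ‖α i‖ ≤ M) (A B : Matrix n n ℂ) :
    ‖(Aᴴ * Φ B).trace‖ ^ 2 ≤ ((Aᴴ * A).trace).re * M ^ 2 * ((Bᴴ * B).trace).re := by
  rw [trace_conjTranspose_mul_self_eq_sum_norm_sq P hP A,
    trace_conjTranspose_mul_self_eq_sum_norm_sq P hP B, Complex.ofReal_re, Complex.ofReal_re,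
    trace_conjTranspose_mul_eq_sum_repr P hP]
  simp only [P.repr_map_eq_mul_of_map_eq_smul hΦ]
  have htriangle : ‖∑ i, star (P.repr A i) * (α i * P.repr B i)‖ ≤
      ∑ i, ‖P.repr A i‖ * (M * ‖P.repr B i‖) := by
    refine norm_sum_le _ _ |>.trans (sum_le_sum fun i _ => ?_)
    rw [norm_mul, norm_mul, norm_star]
    gcongr
    exact hαM i
  calc ‖(c : ℂ) * ∑ i, star (P.repr A i) * (α i * P.repr B i)‖ ^ 2
      = c ^ 2 * ‖∑ i, star (P.repr A i) * (α i * P.repr B i)‖ ^ 2 := by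
        rw [norm_mul, Complex.norm_real, Real.norm_eq_abs, mul_pow, sq_abs]
    _ ≤ c ^ 2 * (∑ i, ‖P.repr A i‖ * (M * ‖P.repr B i‖)) ^ 2 := by gcongr
    _ ≤ c ^ 2 * ((∑ i, ‖P.repr A i‖ ^ 2) * ∑ i, (M * ‖P.repr B i‖) ^ 2) := by
        gcongr
        exact sum_mul_sq_le_sq_mul_sq _ _ _
    _ = c * (∑ i, ‖P.repr A i‖ ^ 2) * M ^ 2 * (c * ∑ i, ‖P.repr B i‖ ^ 2) := by
        simp only [mul_pow, ← mul_sum]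
        ring

end Parseval

section Eigenvalues

variable {𝕜 n : Type*} [RCLike 𝕜] [Fintype n] [DecidableEq n] {A : Matrix n n 𝕜}

theorem IsHermitian.trace_mul_self (hA : A.IsHermitian) :
    (A * A).trace = ∑ i, ((hA.eigenvalues i ^ 2 : ℝ) : 𝕜) := by
  conv_lhs => rw [hA.spectral_theorem, ← map_mul]
  rw [Unitary.conjStarAlgAut_apply, trace_mul_cycle, Unitary.coe_star_mul_self, one_mul,
    diagonal_mul_diagonal, trace_diagonal]
  simp [pow_two]

theorem IsHermitian.eigenvalues_le_one (hA : A.IsHermitian) (h1 : (1 - A).PosSemidef) (i : n) :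
    hA.eigenvalues i ≤ 1 := by
  have hmem : 1 - hA.eigenvalues i ∈ spectrum ℝ (1 - A) := by
    rw [← map_one (algebraMap ℝ (Matrix n n 𝕜)), ← spectrum.singleton_sub_eq]
    exact Set.sub_mem_sub rfl (hA.eigenvalues_mem_spectrum_real i)
  rw [h1.1.spectrum_real_eq_range_eigenvalues] at hmem
  obtain ⟨j, hj⟩ := hmem
  linarith [h1.eigenvalues_nonneg j]

theorem PosSemidef.re_trace_mul_self_le_sq (hA : A.PosSemidef) :
    RCLike.re (A * A).trace ≤ RCLike.re A.trace ^ 2 := by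
  rw [hA.1.trace_mul_self, hA.1.trace_eq_sum_eigenvalues, ← RCLike.ofReal_sum,
    ← RCLike.ofReal_sum, RCLike.ofReal_re, RCLike.ofReal_re]
  exact sum_sq_le_sq_sum_of_nonneg fun i _ => hA.eigenvalues_nonneg i

theorem PosSemidef.re_trace_mul_self_le_rank (hA : A.PosSemidef) (h1 : (1 - A).PosSemidef) :
    RCLike.re (A * A).trace ≤ A.rank := by
  rw [hA.1.trace_mul_self, hA.1.rank_eq_card_non_zero_eigs, Fintype.card_subtype,
    ← RCLike.ofReal_sum, RCLike.ofReal_re, ← sum_boole]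
  refine sum_le_sum fun i _ => ?_
  split_ifs with h
  · exact pow_le_one₀ (hA.eigenvalues_nonneg i) (hA.1.eigenvalues_le_one h1 i)
  · simp [not_not.mp h]

end Eigenvalues

end Matrix

theorem stmt2_general {N : ℕ} {ι : Type*} [Fintype ι] [DecidableEq ι]
    (P : Module.Basis ι ℂ (Matrix (Fin N) (Fin N) ℂ))
    (hortho : ∀ i j, (Matrix.trace ((P i)ᴴ * P j)) / (N : ℂ) = if i = j then 1 else 0)
    (Φ : Matrix (Fin N) (Fin N) ℂ →ₗ[ℂ] Matrix (Fin N) (Fin N) ℂ)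
    (α : ι → ℂ) (hΦ : ∀ i, Φ (P i) = α i • P i)
    (ρ : Matrix (Fin N) (Fin N) ℂ) (hρ : ρ.PosSemidef) (hρtr : ρ.trace = 1)
    (Pm : Matrix (Fin N) (Fin N) ℂ) (hPm : Pm.PosSemidef) (hPm1 : (1 - Pm).PosSemidef)
    (r : ℕ) (hr : Pm.rank ≤ r) :
    ‖(Pmᴴ * Φ ρ).trace‖ ^ 2 ≤
      ((Pm * Pm).trace).re * (⨆ i, ‖α i‖) ^ 2 ∧
    ((Pm * Pm).trace).re * (⨆ i, ‖α i‖) ^ 2 ≤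
      (r : ℝ) * (⨆ i, ‖α i‖) ^ 2 := by
  have hP : ∀ i j, ((P i)ᴴ * P j).trace = if i = j then ((N : ℝ) : ℂ) else 0 := by
    intro i j
    -- clearing the denominator needs no `N ≠ 0`: for `N = 0` every trace vanishes
    have hN : (N : ℂ) = 0 → ((P i)ᴴ * P j).trace = 0 := by
      rw [Nat.cast_eq_zero]
      rintro rfl
      exact Matrix.trace_fin_zero _
    rw [← div_mul_cancel_of_imp hN, hortho]
    split_ifs <;> simp
  set M := ⨆ i, ‖α i‖
  have hαM : ∀ i, ‖α i‖ ≤ M := le_ciSup (Set.finite_range _).bddAbove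
  have hρsq : ((ρᴴ * ρ).trace).re ≤ 1 := by
    simpa [hρ.1.eq, hρtr] using hρ.re_trace_mul_self_le_sq
  have hPmsq : (Pmᴴ * Pm).trace = (Pm * Pm).trace := by rw [hPm.1.eq]
  have hPmsq_nonneg : 0 ≤ ((Pm * Pm).trace).re := by
    rw [← hPmsq]
    exact (Complex.nonneg_iff.mp (Matrix.posSemidef_conjTranspose_mul_self Pm).trace_nonneg).1
  refine ⟨?_, by gcongr; exact hPm.re_trace_mul_self_le_rank hPm1 |>.trans (by exact_mod_cast hr)⟩
  calc ‖(Pmᴴ * Φ ρ).trace‖ ^ 2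
      ≤ ((Pmᴴ * Pm).trace).re * M ^ 2 * ((ρᴴ * ρ).trace).re :=
        Matrix.norm_trace_conjTranspose_mul_map_sq_le P hP hΦ hαM Pm ρ
    _ ≤ ((Pm * Pm).trace).re * M ^ 2 := by
        rw [hPmsq]
        exact mul_le_of_le_one_right (mul_nonneg hPmsq_nonneg (sq_nonneg M)) hρsq

theorem stmt2 {N : ℕ} (hN : 1 ≤ N) {ι : Type*} [Fintype ι] [DecidableEq ι]
    (P : Module.Basis ι ℂ (Matrix (Fin N) (Fin N) ℂ))
    (hortho : ∀ i j, (Matrix.trace ((P i)ᴴ * P j)) / (N : ℂ) = if i = j then 1 else 0)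
    (Φ : Matrix (Fin N) (Fin N) ℂ →ₗ[ℂ] Matrix (Fin N) (Fin N) ℂ)
    (α : ι → ℂ) (hΦ : ∀ i, Φ (P i) = α i • P i)
    (ρ : Matrix (Fin N) (Fin N) ℂ) (hρ : ρ.PosSemidef) (hρtr : ρ.trace = 1)
    (Pm : Matrix (Fin N) (Fin N) ℂ) (hPm : Pm.PosSemidef) (hPm1 : (1 - Pm).PosSemidef)
    (r : ℕ) (hr : Pm.rank ≤ r) :
    ‖(Pmᴴ * Φ ρ).trace‖ ^ 2 ≤
      ((Pm * Pm).trace).re * (⨆ i, ‖α i‖) ^ 2 ∧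
    ((Pm * Pm).trace).re * (⨆ i, ‖α i‖) ^ 2 ≤
      (r : ℝ) * (⨆ i, ‖α i‖) ^ 2 :=
  stmt2_general P hortho Φ α hΦ ρ hρ hρtr Pm hPm hPm1 r hr
end

section
/- Let ψ be a real unit vector in ℝ^D, let E be a real D×D matrix with ‖E‖_op ≤ ε for some ε ≤ 1/4, and let T = ψψᵀ + E. Suppose v is a real unit vector and λ a real number with T v = λ v and λ ≥ 1 − ε. Then the inner product satisfies ⟨ψ, v⟩² ≥ 1 − 2ε; equivalently, writing ψ = ⟨ψ,v⟩ v + w with w orthogonal to v, the orthogonal component satisfies ‖w‖ ≤ √2 · ε. -/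
/-!
With `c = ⟨ψ, v⟩` and `u = E v`, the eigenvalue equation reads `c ψ + u = λ v`. Pairing with `v`
gives `c² + ⟨v, u⟩ = λ ≥ 1 - ε`, and `⟨v, u⟩ ≤ ‖u‖ ≤ ε`, so `c² ≥ 1 - 2ε`. Subtracting
`c² v` shows `c (ψ - c v) = ⟨v, u⟩ v - u`, the component of `-u` orthogonal to `v`, so
`c² ‖ψ - c v‖² ≤ ‖u‖² ≤ ε²`; since `c² ≥ 1/2` when `ε ≤ 1/4`, `‖ψ - c v‖² ≤ 2ε²`.
-/

open scoped BigOperators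

open scoped RealInnerProductSpace

section RankOnePerturbation

variable {F : Type*} [NormedAddCommGroup F] [InnerProductSpace ℝ F] {ψ v u : F} {lam ε : ℝ}

theorem norm_sub_inner_smul_sq_of_norm_eq_one (hv : ‖v‖ = 1) (x : F) :
    ‖x - ⟪v, x⟫ • v‖ ^ 2 = ‖x‖ ^ 2 - ⟪v, x⟫ ^ 2 := by
  rw [norm_sub_sq_real, inner_smul_right, norm_smul, hv, real_inner_comm, Real.norm_eq_abs,
    mul_one, sq_abs]
  ring

theorem sq_inner_add_inner_eq_of_smul_add_eq (hv : ‖v‖ = 1)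
    (heig : ⟪v, ψ⟫ • ψ + u = lam • v) : ⟪v, ψ⟫ ^ 2 + ⟪v, u⟫ = lam := by
  have h := congrArg (⟪v, ·⟫) heig
  simpa only [inner_add_right, inner_smul_right, real_inner_self_eq_norm_sq, hv, one_pow, mul_one,
    sq] using h

theorem inner_smul_sub_eq_of_smul_add_eq (hv : ‖v‖ = 1)
    (heig : ⟪v, ψ⟫ • ψ + u = lam • v) :
    ⟪v, ψ⟫ • (ψ - ⟪v, ψ⟫ • v) = ⟪v, u⟫ • v - u := by
  rw [← sq_inner_add_inner_eq_of_smul_add_eq hv heig] at heig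
  linear_combination (norm := module) heig

theorem one_sub_two_mul_le_sq_inner_of_smul_add_eq (hv : ‖v‖ = 1) (hu : ‖u‖ ≤ ε)
    (heig : ⟪v, ψ⟫ • ψ + u = lam • v) (hlam : 1 - ε ≤ lam) :
    1 - 2 * ε ≤ ⟪v, ψ⟫ ^ 2 := by
  have hs : ⟪v, u⟫ ≤ ε := by
    calc ⟪v, u⟫ ≤ ‖v‖ * ‖u‖ := real_inner_le_norm v u
      _ ≤ ε := by rwa [hv, one_mul]
  linarith [sq_inner_add_inner_eq_of_smul_add_eq hv heig]

theorem norm_sub_inner_smul_le_of_smul_add_eq (hv : ‖v‖ = 1) (hu : ‖u‖ ≤ ε) (hε : ε ≤ 1 / 4)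
    (heig : ⟪v, ψ⟫ • ψ + u = lam • v) (hlam : 1 - ε ≤ lam) :
    ‖ψ - ⟪v, ψ⟫ • v‖ ≤ Real.sqrt 2 * ε := by
  set w := ψ - ⟪v, ψ⟫ • v
  have hε0 : 0 ≤ ε := (norm_nonneg u).trans hu
  have hc : 1 / 2 ≤ ⟪v, ψ⟫ ^ 2 := by
    linarith [one_sub_two_mul_le_sq_inner_of_smul_add_eq hv hu heig hlam]
  have hcw : ⟪v, ψ⟫ ^ 2 * ‖w‖ ^ 2 ≤ ε ^ 2 := by
    calc ⟪v, ψ⟫ ^ 2 * ‖w‖ ^ 2 = ‖⟪v, ψ⟫ • w‖ ^ 2 := by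
          rw [norm_smul, mul_pow, Real.norm_eq_abs, sq_abs]
      _ = ‖u‖ ^ 2 - ⟪v, u⟫ ^ 2 := by
        rw [inner_smul_sub_eq_of_smul_add_eq hv heig, norm_sub_rev,
          norm_sub_inner_smul_sq_of_norm_eq_one hv]
      _ ≤ ε ^ 2 := by nlinarith [norm_nonneg u, sq_nonneg ⟪v, u⟫]
  have hw : ‖w‖ ^ 2 ≤ (Real.sqrt 2 * ε) ^ 2 := by
    rw [mul_pow, Real.sq_sqrt zero_le_two]
    nlinarith [sq_nonneg ‖w‖]
  exact (pow_le_pow_iff_left₀ (norm_nonneg w) (by positivity) two_ne_zero).mp hw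

end RankOnePerturbation

theorem EuclideanSpace.norm_toLp_eq_sqrt_sum_sq {ι : Type*} [Fintype ι] (x : ι → ℝ) :
    ‖WithLp.toLp 2 x‖ = Real.sqrt (∑ i, x i ^ 2) := by
  simp [EuclideanSpace.norm_eq]

theorem stmt6_general {D : ℕ} (ψ : Fin D → ℝ)
    (E : Matrix (Fin D) (Fin D) ℝ) (ε : ℝ) (hεq : ε ≤ 1 / 4)
    (hE : matOpNorm E ≤ ε)
    (v : Fin D → ℝ) (hv : ∑ i, v i ^ 2 = 1)
    (lam : ℝ) (hTv : (Matrix.vecMulVec ψ ψ + E).mulVec v = lam • v)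
    (hlam : 1 - ε ≤ lam) :
    1 - 2 * ε ≤ (∑ i, ψ i * v i) ^ 2 ∧
    Real.sqrt (∑ i, (ψ i - (∑ j, ψ j * v j) * v i) ^ 2) ≤ Real.sqrt 2 * ε := by
  set V := WithLp.toLp 2 v
  set Ψ := WithLp.toLp 2 ψ
  set u := Matrix.toEuclideanCLM (𝕜 := ℝ) E V
  have hinner : ⟪V, Ψ⟫ = ∑ i, ψ i * v i := by
    simp [V, Ψ, EuclideanSpace.inner_toLp_toLp, dotProduct]
  have hV : ‖V‖ = 1 := by rw [EuclideanSpace.norm_toLp_eq_sqrt_sum_sq, hv, Real.sqrt_one]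
  have hu : ‖u‖ ≤ ε := by
    calc ‖u‖ ≤ matOpNorm E * ‖V‖ := (Matrix.toEuclideanCLM (𝕜 := ℝ) E).le_opNorm V
      _ ≤ ε := by rwa [hV, mul_one]
  have heig : ⟪V, Ψ⟫ • Ψ + u = lam • V := by
    have h := congrArg (WithLp.toLp 2) hTv
    rw [Matrix.add_mulVec, Matrix.vecMulVec_mulVec, op_smul_eq_smul, WithLp.toLp_add,
      WithLp.toLp_smul, WithLp.toLp_smul, ← Matrix.toEuclideanCLM_toLp] at h
    rwa [hinner]
  refine ⟨hinner ▸ one_sub_two_mul_le_sq_inner_of_smul_add_eq hV hu heig hlam, ?_⟩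
  have hw := norm_sub_inner_smul_le_of_smul_add_eq hV hu hεq heig hlam
  rwa [hinner, ← WithLp.toLp_smul, ← WithLp.toLp_sub,
    EuclideanSpace.norm_toLp_eq_sqrt_sum_sq] at hw

theorem stmt6 {D : ℕ} (ψ : Fin D → ℝ) (hψ : ∑ i, ψ i ^ 2 = 1)
    (E : Matrix (Fin D) (Fin D) ℝ) (ε : ℝ) (hεq : ε ≤ 1 / 4)
    (hE : matOpNorm E ≤ ε)
    (v : Fin D → ℝ) (hv : ∑ i, v i ^ 2 = 1)
    (lam : ℝ) (hTv : (Matrix.vecMulVec ψ ψ + E).mulVec v = lam • v)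
    (hlam : 1 - ε ≤ lam) :
    1 - 2 * ε ≤ (∑ i, ψ i * v i) ^ 2 ∧
    Real.sqrt (∑ i, (ψ i - (∑ j, ψ j * v j) * v i) ^ 2) ≤ Real.sqrt 2 * ε :=
  stmt6_general ψ E ε hεq hE v hv lam hTv hlam
end

section
/- Let ψ be a real unit vector in ℝ^D, let E be a real D×D matrix with ‖E‖_op ≤ ε for some ε ≤ 1/4, and let T = ψψᵀ + E. Suppose v is a real unit vector and λ a real number with T v = λ v and λ ≥ 1 − ε. Define E' = T − λ vvᵀ. Then E' v = 0 and ‖E'‖_op ≤ (1 + √2) · ε. -/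
/-!
Write `T = ψψᵀ + E` and `c = ⟪ψ, v⟫`, so that the eigen-equation reads `c ψ + E v = λ v`.
Pairing it with `v` gives `c² = λ - ⟪E v, v⟫ ≥ 1 - 2ε ≥ 1/2`. Since `T v = λ v`, the deflated
operator is `E' x = T (x - ⟪v, x⟫ v)`, so only `T` on `v^⊥` matters. There `T w = ⟪ψ, w⟫ ψ + E w`,
and pairing the eigen-equation with `w` gives `c ⟪ψ, w⟫ = -⟪E v, w⟫`, whence
`|⟪ψ, w⟫| ≤ √2 ε ‖w‖` and `‖T w‖ ≤ (1 + √2) ε ‖w‖`.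
-/

open scoped BigOperators

open scoped InnerProductSpace
open InnerProductSpace (rankOne)

section RankOnePerturbation

variable {H : Type*} [NormedAddCommGroup H] [InnerProductSpace ℝ H]

lemma norm_sub_inner_smul_le {v : H} (hv : ‖v‖ = 1) (x : H) : ‖x - ⟪v, x⟫_ℝ • v‖ ≤ ‖x‖ := by
  have h : ‖x - ⟪v, x⟫_ℝ • v‖ ^ 2 = ‖x‖ ^ 2 - ⟪v, x⟫_ℝ ^ 2 := by
    rw [norm_sub_sq_real, inner_smul_right, norm_smul, hv, real_inner_comm, Real.norm_eq_abs,
      mul_one, sq_abs]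
    ring
  refine (pow_le_pow_iff_left₀ (norm_nonneg _) (norm_nonneg _) two_ne_zero).mp ?_
  nlinarith [sq_nonneg ⟪v, x⟫_ℝ]

lemma sub_smul_rankOne_apply {T : H →L[ℝ] H} {v : H} {lam : ℝ} (hTv : T v = lam • v) (x : H) :
    (T - lam • rankOne ℝ v v) x = T (x - ⟪v, x⟫_ℝ • v) := by
  simp [hTv, smul_smul, mul_comm]

lemma sub_smul_rankOne_apply_self {T : H →L[ℝ] H} {v : H} {lam : ℝ} (hv : ‖v‖ = 1)
    (hTv : T v = lam • v) : (T - lam • rankOne ℝ v v) v = 0 := by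
  rw [sub_smul_rankOne_apply hTv, real_inner_self_eq_norm_sq, hv]
  simp

variable {ψ v : H} {E : H →L[ℝ] H} {ε lam : ℝ}

lemma inner_mul_inner_eq_neg_inner_of_eigen (hTv : (rankOne ℝ ψ ψ + E) v = lam • v) {w : H}
    (hw : ⟪v, w⟫_ℝ = 0) : ⟪ψ, v⟫_ℝ * ⟪ψ, w⟫_ℝ = -⟪E v, w⟫_ℝ := by
  have h := congrArg (⟪·, w⟫_ℝ) hTv
  simp only [add_apply, InnerProductSpace.rankOne_apply, inner_add_left, real_inner_smul_left,
    hw] at h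
  simpa [eq_neg_iff_add_eq_zero] using h

lemma one_sub_two_mul_le_sq_inner_of_eigen (hv : ‖v‖ = 1) (hE : ‖E‖ ≤ ε)
    (hTv : (rankOne ℝ ψ ψ + E) v = lam • v) (hlam : 1 - ε ≤ lam) :
    1 - 2 * ε ≤ ⟪ψ, v⟫_ℝ ^ 2 := by
  have h := congrArg (⟪·, v⟫_ℝ) hTv
  simp only [add_apply, InnerProductSpace.rankOne_apply, inner_add_left, real_inner_smul_left,
    real_inner_self_eq_norm_sq, hv] at h
  have hEv : |⟪E v, v⟫_ℝ| ≤ ε :=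
    calc |⟪E v, v⟫_ℝ| ≤ ‖E v‖ * ‖v‖ := abs_real_inner_le_norm _ _
      _ ≤ ε * ‖v‖ * ‖v‖ := by gcongr; exact E.le_of_opNorm_le hE v
      _ = ε := by rw [hv, mul_one, mul_one]
  simp only [one_pow, mul_one] at h
  nlinarith [abs_le.mp hEv, real_inner_comm ψ v]

lemma abs_inner_le_of_eigen_of_inner_eq_zero (hv : ‖v‖ = 1) (hE : ‖E‖ ≤ ε) (hε : ε ≤ 1 / 4)
    (hTv : (rankOne ℝ ψ ψ + E) v = lam • v) (hlam : 1 - ε ≤ lam) {w : H}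
    (hw : ⟪v, w⟫_ℝ = 0) : |⟪ψ, w⟫_ℝ| ≤ √2 * ε * ‖w‖ := by
  have hprod : |⟪ψ, v⟫_ℝ| * |⟪ψ, w⟫_ℝ| ≤ ε * ‖w‖ :=
    calc |⟪ψ, v⟫_ℝ| * |⟪ψ, w⟫_ℝ| = |⟪E v, w⟫_ℝ| := by
          rw [← abs_mul, inner_mul_inner_eq_neg_inner_of_eigen hTv hw, abs_neg]
      _ ≤ ‖E v‖ * ‖w‖ := abs_real_inner_le_norm _ _
      _ ≤ ε * ‖v‖ * ‖w‖ := by gcongr; exact E.le_of_opNorm_le hE v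
      _ = ε * ‖w‖ := by rw [hv, mul_one]
  have hc : 1 ≤ √2 * |⟪ψ, v⟫_ℝ| := by
    have h2 : (1 : ℝ) ≤ (√2 * |⟪ψ, v⟫_ℝ|) ^ 2 := by
      rw [mul_pow, Real.sq_sqrt zero_le_two, sq_abs]
      nlinarith [one_sub_two_mul_le_sq_inner_of_eigen hv hE hTv hlam]
    nlinarith [mul_nonneg (Real.sqrt_nonneg 2) (abs_nonneg ⟪ψ, v⟫_ℝ)]
  calc |⟪ψ, w⟫_ℝ| ≤ (√2 * |⟪ψ, v⟫_ℝ|) * |⟪ψ, w⟫_ℝ| := le_mul_of_one_le_left (abs_nonneg _) hc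
    _ = √2 * (|⟪ψ, v⟫_ℝ| * |⟪ψ, w⟫_ℝ|) := mul_assoc _ _ _
    _ ≤ √2 * (ε * ‖w‖) := by gcongr
    _ = √2 * ε * ‖w‖ := (mul_assoc _ _ _).symm

theorem norm_rankOne_add_sub_smul_rankOne_le (hψ : ‖ψ‖ = 1) (hv : ‖v‖ = 1) (hE : ‖E‖ ≤ ε)
    (hε : ε ≤ 1 / 4) (hTv : (rankOne ℝ ψ ψ + E) v = lam • v) (hlam : 1 - ε ≤ lam) :
    ‖rankOne ℝ ψ ψ + E - lam • rankOne ℝ v v‖ ≤ (1 + √2) * ε := by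
  have hε0 : 0 ≤ ε := (norm_nonneg E).trans hE
  refine ContinuousLinearMap.opNorm_le_bound _ (by positivity) fun x => ?_
  set w := x - ⟪v, x⟫_ℝ • v
  have hw : ⟪v, w⟫_ℝ = 0 := by
    simp [w, inner_sub_right, inner_smul_right, hv]
  rw [sub_smul_rankOne_apply hTv]
  calc ‖(rankOne ℝ ψ ψ + E) w‖ = ‖⟪ψ, w⟫_ℝ • ψ + E w‖ := rfl
    _ ≤ |⟪ψ, w⟫_ℝ| * ‖ψ‖ + ‖E‖ * ‖w‖ := by
        grw [norm_add_le, norm_smul, Real.norm_eq_abs, E.le_opNorm]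
    _ ≤ √2 * ε * ‖w‖ * 1 + ε * ‖w‖ := by
        rw [hψ]
        gcongr
        exact abs_inner_le_of_eigen_of_inner_eq_zero hv hE hε hTv hlam hw
    _ = (1 + √2) * ε * ‖w‖ := by ring
    _ ≤ (1 + √2) * ε * ‖x‖ := by gcongr; exact norm_sub_inner_smul_le hv x

end RankOnePerturbation

lemma Matrix.toEuclideanCLM_vecMulVec {n : Type*} [Fintype n] [DecidableEq n] (a b : n → ℝ) :
    Matrix.toEuclideanCLM (𝕜 := ℝ) (Matrix.vecMulVec a b) =
      rankOne ℝ (WithLp.toLp 2 a) (WithLp.toLp 2 b) := by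
  ext x i
  simp [Matrix.vecMulVec_mulVec, dotProduct, PiLp.inner_apply, mul_comm]

lemma EuclideanSpace.norm_toLp_eq_one {n : Type*} [Fintype n] {x : n → ℝ}
    (hx : ∑ i, x i ^ 2 = 1) : ‖WithLp.toLp 2 x‖ = 1 := by
  rw [EuclideanSpace.norm_eq]
  simpa [sq_abs] using hx

theorem stmt7 {D : ℕ} (ψ : Fin D → ℝ) (hψ : ∑ i, ψ i ^ 2 = 1)
    (E : Matrix (Fin D) (Fin D) ℝ) (ε : ℝ) (hεq : ε ≤ 1 / 4)
    (hE : matOpNorm E ≤ ε)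
    (v : Fin D → ℝ) (hv : ∑ i, v i ^ 2 = 1)
    (lam : ℝ) (hTv : (Matrix.vecMulVec ψ ψ + E).mulVec v = lam • v)
    (hlam : 1 - ε ≤ lam) :
    (Matrix.vecMulVec ψ ψ + E - lam • Matrix.vecMulVec v v).mulVec v = 0 ∧
    matOpNorm (Matrix.vecMulVec ψ ψ + E - lam • Matrix.vecMulVec v v) ≤
      (1 + Real.sqrt 2) * ε := by
  set T := Matrix.toEuclideanCLM (n := Fin D) (𝕜 := ℝ)
  have hT : T (Matrix.vecMulVec ψ ψ + E - lam • Matrix.vecMulVec v v) =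
      rankOne ℝ (WithLp.toLp 2 ψ) (WithLp.toLp 2 ψ) + T E -
        lam • rankOne ℝ (WithLp.toLp 2 v) (WithLp.toLp 2 v) := by
    simp only [T, map_sub, map_add, map_smul, Matrix.toEuclideanCLM_vecMulVec]
  have hTv' : (rankOne ℝ (WithLp.toLp 2 ψ) (WithLp.toLp 2 ψ) + T E) (WithLp.toLp 2 v) =
      lam • WithLp.toLp 2 v := by
    rw [← Matrix.toEuclideanCLM_vecMulVec, ← map_add, Matrix.toEuclideanCLM_toLp, hTv]
    rfl
  have hv' := EuclideanSpace.norm_toLp_eq_one hv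
  constructor
  · have h := sub_smul_rankOne_apply_self hv' hTv'
    rwa [← hT, Matrix.toEuclideanCLM_toLp, WithLp.toLp_eq_zero] at h
  · rw [matOpNorm, hT]
    exact norm_rankOne_add_sub_smul_rankOne_le (EuclideanSpace.norm_toLp_eq_one hψ) hv' hE hεq
      hTv' hlam
end

section
/- Let V be a finite-dimensional complex inner product space, let λ ∈ (0,1] and ε ∈ [0,λ) be real. Let v ∈ V be a unit vector, let E be a linear operator on V with ‖E‖_op ≤ ε and E v = 0, and let T = λ·(v v†) + E, where v v† is the orthogonal projection onto the span of v. Then there exists a vector f ∈ V with ‖f‖ ≤ 1/(1 − ε/λ) such that for every natural number K and all vectors a, b ∈ V: |⟨a, T^K b⟩ − ⟨a, v⟩·⟨f, b⟩·λ^K| ≤ (1 + 1/(1 − ε/λ)) · ‖a‖ · ‖b‖ · ε^K. -/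
/-!
Let `f` solve `λ f - E† f = λ v`. It exists because `‖E†‖ ≤ ε < λ` puts `λ` outside the spectrum
of `E†`, and `λ ‖f‖ ≤ λ + ε ‖f‖` gives `‖f‖ ≤ 1 / (1 - ε / λ)`. Pairing with `v` (using `E v = 0`)
gives `⟨f, v⟩ = 1`, and then `f` is a left eigenvector: `⟨f, T x⟩ = λ ⟨f, x⟩`.
Since `E v = 0` we have `E T = E²`, and the oblique projection `y ↦ y - ⟨f, y⟩ v` kills `v`,
so it turns `T` into `E`. Hence `T^K x = λ^K ⟨f, x⟩ v + (E^K x - ⟨f, E^K x⟩ v)`, and the last term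
has norm at most `(1 + ‖f‖) ε^K ‖x‖`.
-/

open ContinuousLinearMap
open scoped InnerProductSpace

namespace Module.End

variable {R M : Type*} [CommRing R] [AddCommGroup M] [Module R M]
  {T E : Module.End R M} {ψ φ : M →ₗ[R] R} {v : M}

theorem mul_pow_eq_pow_succ_of_apply_eq_smul_add (hT : ∀ x, T x = ψ x • v + E x)
    (hEv : E v = 0) (m : ℕ) : E * T ^ m = E ^ (m + 1) := by
  have hET : E * T = E * E := by
    ext x
    rw [mul_apply, hT, map_add, map_smul, hEv, smul_zero, zero_add, mul_apply]
  induction m with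
  | zero => simp
  | succ m ih =>
    rw [pow_succ, ← mul_assoc, ih, pow_succ E m, mul_assoc, hET, ← mul_assoc, ← pow_succ,
      ← pow_succ]

theorem pow_apply_sub_smul_eq_of_apply_eq_smul_add (hT : ∀ x, T x = ψ x • v + E x)
    (hEv : E v = 0) (hφv : φ v = 1) (K : ℕ) (x : M) :
    (T ^ K) x - φ ((T ^ K) x) • v = (E ^ K) x - φ ((E ^ K) x) • v := by
  cases K with
  | zero => rfl
  | succ K =>
    have hET : (E ^ (K + 1)) x = E ((T ^ K) x) := by
      rw [← mul_pow_eq_pow_succ_of_apply_eq_smul_add hT hEv, mul_apply]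
    rw [pow_succ', mul_apply, hET, hT, map_add, map_smul, hφv, smul_eq_mul, mul_one]
    module

theorem pow_apply_eq_of_apply_eq_smul_add (hT : ∀ x, T x = ψ x • v + E x) (hEv : E v = 0)
    {μ : R} (hφv : φ v = 1) (hφT : ∀ x, φ (T x) = μ * φ x) (K : ℕ) (x : M) :
    (T ^ K) x = (μ ^ K * φ x) • v + ((E ^ K) x - φ ((E ^ K) x) • v) := by
  have hφTK : φ ((T ^ K) x) = μ ^ K * φ x := by
    induction K with
    | zero => simp
    | succ K ih => rw [pow_succ', mul_apply, hφT, ih, pow_succ']; ring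
  rw [← pow_apply_sub_smul_eq_of_apply_eq_smul_add hT hEv hφv, hφTK, add_sub_cancel]

end Module.End

namespace ContinuousLinearMap

variable {𝕜 E : Type*} [NontriviallyNormedField 𝕜] [NormedAddCommGroup E] [NormedSpace 𝕜 E]

theorem exists_smul_sub_apply_eq [CompleteSpace E] (B : E →L[𝕜] E) {c : 𝕜} (h : ‖B‖ < ‖c‖)
    (w : E) : ∃ f, c • f - B f = w := by
  have hc : c ∈ resolventSet 𝕜 B :=
    spectrum.mem_resolventSet_of_norm_lt_mul ((mul_le_of_le_one_right (norm_nonneg B)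
      norm_id_le).trans_lt h)
  obtain ⟨u, hu⟩ := spectrum.mem_resolventSet_iff.mp hc
  refine ⟨(↑u⁻¹ : E →L[𝕜] E) w, ?_⟩
  have h1 : (↑u : E →L[𝕜] E) ((↑u⁻¹ : E →L[𝕜] E) w) = w := by
    rw [← mul_apply_eq_comp, u.mul_inv, one_apply_eq_self]
  rwa [hu, Algebra.algebraMap_eq_smul_one, sub_apply, smul_apply, one_apply_eq_self] at h1

theorem norm_le_of_smul_sub_apply_eq {B : E →L[𝕜] E} {c : 𝕜} {ε : ℝ} {f w : E} (hB : ‖B‖ ≤ ε)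
    (hε : ε < ‖c‖) (hf : c • f - B f = w) : ‖f‖ ≤ ‖w‖ / (‖c‖ - ε) := by
  rw [le_div_iff₀ (sub_pos.mpr hε)]
  have : ‖c‖ * ‖f‖ ≤ ‖w‖ + ε * ‖f‖ := calc
    ‖c‖ * ‖f‖ = ‖w + B f‖ := by rw [← hf, sub_add_cancel, norm_smul]
    _ ≤ ‖w‖ + ε * ‖f‖ := (norm_add_le _ _).trans (by gcongr; exact B.le_of_opNorm_le hB f)
  linarith

theorem norm_pow_apply_le {B : E →L[𝕜] E} {ε : ℝ} (hB : ‖B‖ ≤ ε) (K : ℕ) (x : E) :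
    ‖(B ^ K) x‖ ≤ ε ^ K * ‖x‖ := by
  induction K with
  | zero => simp
  | succ K ih =>
    rw [pow_succ', mul_apply_eq_comp, pow_succ', mul_assoc]
    exact B.le_of_opNorm_le_of_le hB ih

end ContinuousLinearMap

section InnerProductSpace

variable {𝕜 V : Type*} [RCLike 𝕜] [NormedAddCommGroup V] [InnerProductSpace 𝕜 V]

theorem norm_sub_inner_smul_le_s9 (f v y : V) : ‖y - ⟪f, y⟫_𝕜 • v‖ ≤ (1 + ‖f‖ * ‖v‖) * ‖y‖ := calc
  ‖y - ⟪f, y⟫_𝕜 • v‖ ≤ ‖y‖ + ‖f‖ * ‖y‖ * ‖v‖ :=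
    (norm_sub_le _ _).trans (by rw [norm_smul]; gcongr; exact norm_inner_le_norm f y)
  _ = (1 + ‖f‖ * ‖v‖) * ‖y‖ := by ring

variable [CompleteSpace V] {E : V →L[𝕜] V} {lam : ℝ} {v f : V}

theorem inner_apply_eq_of_smul_sub_adjoint_apply_eq
    (hf : (lam : 𝕜) • f - E.adjoint f = (lam : 𝕜) • v) (x : V) :
    ⟪f, E x⟫_𝕜 = lam * ⟪f, x⟫_𝕜 - lam * ⟪v, x⟫_𝕜 := by
  have hEf : E.adjoint f = (lam : 𝕜) • f - (lam : 𝕜) • v := by rw [← hf, sub_sub_cancel]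
  rw [← adjoint_inner_left, hEf, inner_sub_left, inner_smul_left, inner_smul_left,
    RCLike.conj_ofReal]

theorem inner_eq_one_of_smul_sub_adjoint_apply_eq (hlam : lam ≠ 0) (hv : ‖v‖ = 1)
    (hEv : E v = 0) (hf : (lam : 𝕜) • f - E.adjoint f = (lam : 𝕜) • v) : ⟪f, v⟫_𝕜 = 1 := by
  have h := inner_apply_eq_of_smul_sub_adjoint_apply_eq hf v
  rw [hEv, inner_zero_right, inner_self_eq_norm_sq_to_K, hv, RCLike.ofReal_one, one_pow] at h
  exact mul_left_cancel₀ (RCLike.ofReal_ne_zero.mpr hlam) (by linear_combination -h)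

variable {T : V →L[𝕜] V}

theorem inner_apply_eq_mul_inner_of_smul_sub_adjoint_apply_eq
    (hT : ∀ x, T x = (lam : 𝕜) • (⟪v, x⟫_𝕜 • v) + E x) (hfv : ⟪f, v⟫_𝕜 = 1)
    (hf : (lam : 𝕜) • f - E.adjoint f = (lam : 𝕜) • v) (x : V) :
    ⟪f, T x⟫_𝕜 = lam * ⟪f, x⟫_𝕜 := by
  rw [hT, inner_add_right, inner_smul_right, inner_smul_right, hfv,
    inner_apply_eq_of_smul_sub_adjoint_apply_eq hf]
  ring

theorem pow_apply_eq_of_smul_sub_adjoint_apply_eq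
    (hT : ∀ x, T x = (lam : 𝕜) • (⟪v, x⟫_𝕜 • v) + E x) (hlam : lam ≠ 0) (hv : ‖v‖ = 1)
    (hEv : E v = 0) (hf : (lam : 𝕜) • f - E.adjoint f = (lam : 𝕜) • v) (K : ℕ) (x : V) :
    (T ^ K) x = ((lam : 𝕜) ^ K * ⟪f, x⟫_𝕜) • v + ((E ^ K) x - ⟪f, (E ^ K) x⟫_𝕜 • v) := by
  have hfv := inner_eq_one_of_smul_sub_adjoint_apply_eq hlam hv hEv hf
  have hT' : ∀ x, (T : V →ₗ[𝕜] V) x =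
      ((lam : 𝕜) • innerₛₗ 𝕜 v) x • v + (E : V →ₗ[𝕜] V) x := by
    simpa only [LinearMap.smul_apply, innerₛₗ_apply_apply, smul_eq_mul, smul_smul, coe_coe]
      using hT
  have := Module.End.pow_apply_eq_of_apply_eq_smul_add (φ := innerₛₗ 𝕜 f) hT' hEv hfv
    (inner_apply_eq_mul_inner_of_smul_sub_adjoint_apply_eq hT hfv hf) K x
  simpa only [← toLinearMap_pow, coe_coe, innerₛₗ_apply_apply] using this

theorem norm_inner_pow_apply_sub_le
    (hT : ∀ x, T x = (lam : 𝕜) • (⟪v, x⟫_𝕜 • v) + E x) (hlam : lam ≠ 0) (hv : ‖v‖ = 1)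
    {ε : ℝ} (hE : ‖E‖ ≤ ε) (hEv : E v = 0) (hf : (lam : 𝕜) • f - E.adjoint f = (lam : 𝕜) • v)
    (K : ℕ) (a b : V) :
    ‖⟪a, (T ^ K) b⟫_𝕜 - ⟪a, v⟫_𝕜 * ⟪f, b⟫_𝕜 * (lam : 𝕜) ^ K‖ ≤
      (1 + ‖f‖) * ‖a‖ * ‖b‖ * ε ^ K := by
  have hdiff : ⟪a, (T ^ K) b⟫_𝕜 - ⟪a, v⟫_𝕜 * ⟪f, b⟫_𝕜 * (lam : 𝕜) ^ K
      = ⟪a, (E ^ K) b - ⟪f, (E ^ K) b⟫_𝕜 • v⟫_𝕜 := by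
    rw [pow_apply_eq_of_smul_sub_adjoint_apply_eq hT hlam hv hEv hf, inner_add_right,
      inner_smul_right]
    ring
  calc ‖⟪a, (T ^ K) b⟫_𝕜 - ⟪a, v⟫_𝕜 * ⟪f, b⟫_𝕜 * (lam : 𝕜) ^ K‖
      ≤ ‖a‖ * ((1 + ‖f‖ * ‖v‖) * ‖(E ^ K) b‖) :=
        hdiff ▸ (norm_inner_le_norm _ _).trans (by gcongr; exact norm_sub_inner_smul_le_s9 f v _)
    _ ≤ ‖a‖ * ((1 + ‖f‖) * (ε ^ K * ‖b‖)) := by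
        rw [hv, mul_one]
        gcongr
        exact norm_pow_apply_le hE K b
    _ = (1 + ‖f‖) * ‖a‖ * ‖b‖ * ε ^ K := by ring

end InnerProductSpace

theorem stmt9_general {V : Type*} [NormedAddCommGroup V] [InnerProductSpace ℂ V]
    [FiniteDimensional ℂ V]
    (lam : ℝ) (hlam0 : 0 < lam)
    (ε : ℝ) (hε0 : 0 ≤ ε) (heps_lt : ε < lam)
    (v : V) (hv : ‖v‖ = 1)
    (E : V →L[ℂ] V) (hE : ‖E‖ ≤ ε) (hEv : E v = 0)
    (T : V →L[ℂ] V)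
    (hT : ∀ x : V, T x = (lam : ℂ) • ((inner ℂ v x : ℂ) • v) + E x) :
    ∃ f : V, ‖f‖ ≤ 1 / (1 - ε / lam) ∧
      ∀ (K : ℕ) (a b : V),
        ‖(inner ℂ a ((T ^ K) b) : ℂ) -
            (inner ℂ a v : ℂ) * (inner ℂ f b : ℂ) * (lam : ℂ) ^ K‖ ≤
          (1 + 1 / (1 - ε / lam)) * ‖a‖ * ‖b‖ * ε ^ K := by
  have hε : ε < ‖(lam : ℂ)‖ := by rwa [Complex.norm_real, Real.norm_of_nonneg hlam0.le]
  have hE' : ‖E.adjoint‖ ≤ ε := by rwa [LinearIsometryEquiv.norm_map]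
  obtain ⟨f, hf⟩ := E.adjoint.exists_smul_sub_apply_eq (hE'.trans_lt hε) ((lam : ℂ) • v)
  have hf_norm : ‖f‖ ≤ 1 / (1 - ε / lam) := by
    refine (norm_le_of_smul_sub_apply_eq hE' hε hf).trans_eq ?_
    rw [norm_smul, hv, Complex.norm_real, Real.norm_of_nonneg hlam0.le]
    field_simp
  refine ⟨f, hf_norm, fun K a b => ?_⟩
  refine (norm_inner_pow_apply_sub_le hT hlam0.ne' hv hE hEv hf K a b).trans ?_
  gcongr

theorem stmt9 {V : Type*} [NormedAddCommGroup V] [InnerProductSpace ℂ V]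
    [FiniteDimensional ℂ V]
    (lam : ℝ) (hlam0 : 0 < lam) (hlam1 : lam ≤ 1)
    (ε : ℝ) (hε0 : 0 ≤ ε) (heps_lt : ε < lam)
    (v : V) (hv : ‖v‖ = 1)
    (E : V →L[ℂ] V) (hE : ‖E‖ ≤ ε) (hEv : E v = 0)
    (T : V →L[ℂ] V)
    (hT : ∀ x : V, T x = (lam : ℂ) • ((inner ℂ v x : ℂ) • v) + E x) :
    ∃ f : V, ‖f‖ ≤ 1 / (1 - ε / lam) ∧
      ∀ (K : ℕ) (a b : V),
        ‖(inner ℂ a ((T ^ K) b) : ℂ) -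
            (inner ℂ a v : ℂ) * (inner ℂ f b : ℂ) * (lam : ℂ) ^ K‖ ≤
          (1 + 1 / (1 - ε / lam)) * ‖a‖ * ‖b‖ * ε ^ K :=
  stmt9_general lam hlam0 ε hε0 heps_lt v hv E hE hEv T hT
end
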